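/- Suppose b₁...bₙ immediately follows a₁...aₙ in the full Gray code of words, with k the unique index where they differ. If b_k = a_k + 1 and a₁...aₙ is arc-disconnected, then b₁...bₙ is arc-disconnected; if b_k = a_k − 1 and a₁...aₙ is arc-connected, then b₁...bₙ is arc-connected. -/

import Mathlib

/-! Every word of the full Gray code of length `n` has `a_i ≤ 2i - 1`. So if `b` dominates `a`
letterwise, a witness `k` of arc-disconnectedness of `a` is still one of `b`: `b_k` is squeezed
between `a_k = 2k - 1` and the bound `2k - 1`, and the later letters of `b` only grow. Two words
that differ by `±1` in a single letter are comparable letterwise, and the two claims are this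
transfer applied from `a` to `b` and from `b` to `a`. -/

/-- The full Gray code of words: for `n = 0` the single empty word; words of
the length-`n` code at even (0-indexed, i.e. odd 1-indexed) positions are
extended by last letters `1, 2, …, 2(n+1)-1` in increasing order, those at odd
(0-indexed) positions by the same last letters in decreasing order. -/
def grayCode : ℕ → List (List ℕ)
  | 0 => [[]]
  | n+1 =>
      (((grayCode n).zipIdx.map Prod.swap).map (fun p =>
        if p.1 % 2 = 0 then
          (List.range (2*n + 1)).map (fun j => p.2 ++ [j + 1])
        else
          ((List.range (2*n + 1)).map (fun j => p.2 ++ [j + 1])).reverse)).flatten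

/-- The 1-indexed `i`-th letter of a word. -/
def wd (a : List ℕ) (i : ℕ) : ℕ := a.getD (i - 1) 0

/-- A word `a₁…aₙ` is arc-disconnected if there is a `k ≥ 2` with
`a_k = 2k-1` and `a_j ≥ 2k-1` for all `j > k`. -/
def ArcDiscL (a : List ℕ) : Prop :=
  ∃ k, 2 ≤ k ∧ k ≤ a.length ∧ wd a k = 2*k - 1 ∧
    ∀ j, k < j → j ≤ a.length → 2*k - 1 ≤ wd a j

lemma exists_append_of_mem_grayCode_succ {n : ℕ} {w : List ℕ} (hw : w ∈ grayCode (n + 1)) :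
    ∃ p ∈ grayCode n, ∃ j < 2 * n + 1, w = p ++ [j + 1] := by
  simp only [grayCode, List.mem_flatten, List.mem_map] at hw
  obtain ⟨l, ⟨_, ⟨⟨p, i⟩, hp, rfl⟩, rfl⟩, hwl⟩ := hw
  have hmem : w ∈ (List.range (2 * n + 1)).map (fun j => p ++ [j + 1]) := by
    split at hwl
    · exact hwl
    · exact List.mem_reverse.mp hwl
  obtain ⟨j, hj, rfl⟩ := List.mem_map.mp hmem
  exact ⟨p, List.fst_mem_of_mem_zipIdx hp, j, List.mem_range.mp hj, rfl⟩

lemma length_of_mem_grayCode : ∀ {n : ℕ} {w : List ℕ}, w ∈ grayCode n → w.length = n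
  | 0, w, hw => by simp_all [grayCode]
  | n + 1, w, hw => by
    obtain ⟨p, hp, j, -, rfl⟩ := exists_append_of_mem_grayCode_succ hw
    simp [length_of_mem_grayCode hp]

lemma wd_le_of_mem_grayCode : ∀ {n : ℕ} {w : List ℕ}, w ∈ grayCode n →
    ∀ i, 0 < i → wd w i ≤ 2 * i - 1
  | 0, w, hw, i, _ => by simp_all [grayCode, wd]
  | n + 1, w, hw, i, hi => by
    obtain ⟨p, hp, j, hj, rfl⟩ := exists_append_of_mem_grayCode_succ hw
    have hlen := length_of_mem_grayCode hp
    by_cases hold : i - 1 < p.length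
    · rw [wd, List.getD_append _ _ _ _ hold]
      exact wd_le_of_mem_grayCode hp i hi
    · rw [wd, List.getD_append_right _ _ _ _ (not_lt.mp hold)]
      cases hlast : i - 1 - p.length <;> simp
      omega

lemma ArcDiscL.mono {a b : List ℕ} (hlen : a.length = b.length) (hle : ∀ i, wd a i ≤ wd b i)
    (hbound : ∀ i, 0 < i → wd b i ≤ 2 * i - 1) (ha : ArcDiscL a) : ArcDiscL b := by
  obtain ⟨k, hk2, hkl, hak, hafter⟩ := ha
  refine ⟨k, hk2, hlen ▸ hkl, le_antisymm (hbound k (by omega)) (hak ▸ hle k), ?_⟩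
  intro j hkj hjl
  exact (hafter j hkj (hlen ▸ hjl)).trans (hle j)

theorem stmt_14_general (n m : ℕ) (a b : List ℕ)
    (ha : (grayCode n)[m]? = some a) (hb : (grayCode n)[m+1]? = some b)
    (k : ℕ) (hagree : ∀ j, j ≠ k → wd b j = wd a j) :
    (wd b k = wd a k + 1 → ArcDiscL a → ArcDiscL b) ∧
    (wd a k = wd b k + 1 → ¬ ArcDiscL a → ¬ ArcDiscL b) := by
  have hma : a ∈ grayCode n := List.mem_of_getElem? ha
  have hmb : b ∈ grayCode n := List.mem_of_getElem? hb
  have hlen : a.length = b.length :=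
    (length_of_mem_grayCode hma).trans (length_of_mem_grayCode hmb).symm
  have le_of_agree {x y : List ℕ} (hxy : ∀ j, j ≠ k → wd y j = wd x j) (hk : wd x k ≤ wd y k) :
      ∀ j, wd x j ≤ wd y j := by
    intro j
    by_cases hj : j = k
    · exact hj ▸ hk
    · exact (hxy j hj).ge
  refine ⟨fun hup hda => ?_, fun hdown hca hdb => ?_⟩
  · exact ArcDiscL.mono hlen (le_of_agree hagree (by omega)) (wd_le_of_mem_grayCode hmb) hda
  · refine hca (ArcDiscL.mono hlen.symm ?_ (wd_le_of_mem_grayCode hma) hdb)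
    exact le_of_agree (fun j hj => (hagree j hj).symm) (by omega)

/-- Let `b` immediately follow `a` in the full Gray code, with
`k` the unique differing position. If `b_k = a_k + 1` and `a` is
arc-disconnected, then so is `b`; if `b_k = a_k - 1` and `a` is arc-connected,
then so is `b`. -/
theorem stmt_14 (n m : ℕ) (a b : List ℕ)
    (ha : (grayCode n)[m]? = some a) (hb : (grayCode n)[m+1]? = some b)
    (k : ℕ) (hk : wd b k ≠ wd a k) (hagree : ∀ j, j ≠ k → wd b j = wd a j) :
    (wd b k = wd a k + 1 → ArcDiscL a → ArcDiscL b) ∧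
    (wd a k = wd b k + 1 → ¬ ArcDiscL a → ¬ ArcDiscL b) :=
  stmt_14_general n m a b ha hb k hagree
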